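/- arXiv:1605.01791 — 4 statements merged into one kernel-verified Lean document; each statement's English description precedes it below -/
import Mathlib

section
/- Let (E, 𝓔, μ) be a probability space and let L be a bounded self-adjoint positive operator on the real Hilbert space L²(μ). Let (X_t)_{t≥0} be an E-valued, jointly measurable stochastic process on a probability space (Ω, P) such that for all bounded measurable h, k : E → ℝ and all s, t ≥ 0, E_P[h(X_s) k(X_t)] = ⟨h, exp(−|t−s| L) k⟩_{L²(μ)}, where exp denotes the operator exponential. Let f : E → ℝ be bounded measurable, let g : E → ℝ be a bounded measurable representative of L f ∈ L²(μ), and set M_t := f(X_t) − f(X_0) + ∫₀ᵗ g(X_s) ds. Then lim_{t→∞} (1/t) E_P[M_t²] = 2 ⟨f, L f⟩_{L²(μ)}. -/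
/-!
Put `ψ r = ⟪f, exp(-rL) f⟫`. Since `g` represents `L f` and `L` is symmetric, the covariances of
`f(X)` and `g(X)` at times `s, t` are `ψ`, `-ψ'` and `ψ''` evaluated at `|t - s|`. Expanding
`M_t²` and exchanging `E` with the time integrals, the two cross terms between `f(X_t)`, `f(X_0)`
and `∫₀ᵗ g(X_s) ds` cancel, and `∫₀ᵗ∫₀ᵗ ψ''(|u - s|) du ds = 2 (ψ t - ψ 0 - t ψ' 0)`.
Hence `E[M_t²] = -2 t ψ'(0) = 2 t ⟪f, L f⟫` exactly for every `t ≥ 0`.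
-/

open MeasureTheory Filter
open scoped RealInnerProductSpace

theorem abs_intervalIntegral_le_of_abs_le {y : ℝ → ℝ} {C : ℝ} (hyC : ∀ s, |y s| ≤ C) (a b : ℝ) :
    |∫ s in a..b, y s| ≤ C * |b - a| :=
  (Real.norm_eq_abs _).symm.trans_le <|
    intervalIntegral.norm_integral_le_of_norm_le_const fun s _ =>
      (Real.norm_eq_abs _).trans_le (hyC s)

section BoundedProcess

variable {Ω : Type*} [MeasurableSpace Ω] {P : Measure Ω} [IsFiniteMeasure P]

theorem integrable_mul_of_abs_le {u v : Ω → ℝ} (hu : Measurable u) (hv : Measurable v)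
    {C D : ℝ} (huC : ∀ ω, |u ω| ≤ C) (hvD : ∀ ω, |v ω| ≤ D) :
    Integrable (fun ω => u ω * v ω) P :=
  .of_bound (hu.mul hv).aestronglyMeasurable (C * D) <| .of_forall fun ω => by
    rw [Real.norm_eq_abs, abs_mul]
    exact mul_le_mul (huC ω) (hvD ω) (abs_nonneg _) ((abs_nonneg _).trans (huC ω))

theorem integral_sub_add_sq {a b c : Ω → ℝ} (ha : Measurable a) (hb : Measurable b)
    (hc : Measurable c) {Ca Cb Cc : ℝ} (haC : ∀ ω, |a ω| ≤ Ca) (hbC : ∀ ω, |b ω| ≤ Cb)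
    (hcC : ∀ ω, |c ω| ≤ Cc) :
    ∫ ω, (a ω - b ω + c ω) ^ 2 ∂P
      = ∫ ω, a ω * a ω ∂P + ∫ ω, b ω * b ω ∂P + ∫ ω, c ω * c ω ∂P - 2 * ∫ ω, a ω * b ω ∂P
        + 2 * ∫ ω, a ω * c ω ∂P - 2 * ∫ ω, b ω * c ω ∂P := by
  have haa := integrable_mul_of_abs_le (P := P) ha ha haC haC
  have hbb := integrable_mul_of_abs_le (P := P) hb hb hbC hbC
  have hcc := integrable_mul_of_abs_le (P := P) hc hc hcC hcC
  have hab := integrable_mul_of_abs_le (P := P) ha hb haC hbC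
  have hac := integrable_mul_of_abs_le (P := P) ha hc haC hcC
  have hbc := integrable_mul_of_abs_le (P := P) hb hc hbC hcC
  calc ∫ ω, (a ω - b ω + c ω) ^ 2 ∂P
      = ∫ ω, a ω * a ω + b ω * b ω + c ω * c ω - 2 * (a ω * b ω) + 2 * (a ω * c ω)
          - 2 * (b ω * c ω) ∂P := integral_congr_ae (.of_forall fun ω => by ring)
    _ = _ := by
      simp (disch := fun_prop) only [integral_sub, integral_add, integral_const_mul]

variable {Y : ℝ → Ω → ℝ}

theorem measurable_intervalIntegral_of_uncurry (hY : Measurable (Function.uncurry Y)) (a b : ℝ) :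
    Measurable fun ω => ∫ s in a..b, Y s ω :=
  ((hY.stronglyMeasurable.integral_prod_left (μ := volume.restrict (Set.Ioc a b))).sub
    (hY.stronglyMeasurable.integral_prod_left (μ := volume.restrict (Set.Ioc b a)))).measurable

theorem integral_mul_intervalIntegral {Z : Ω → ℝ} (hZ : Measurable Z) {D : ℝ}
    (hZD : ∀ ω, |Z ω| ≤ D) (hY : Measurable (Function.uncurry Y)) {C : ℝ}
    (hYC : ∀ s ω, |Y s ω| ≤ C) (a b : ℝ) :
    ∫ ω, Z ω * (∫ s in a..b, Y s ω) ∂P = ∫ s in a..b, ∫ ω, Z ω * Y s ω ∂P := by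
  have : IsFiniteMeasure (volume.restrict (Set.uIoc a b)) :=
    Real.isFiniteMeasure_restrict_Ioc _ _
  have hint : Integrable (Function.uncurry fun s ω => Z ω * Y s ω)
      ((volume.restrict (Set.uIoc a b)).prod P) :=
    integrable_mul_of_abs_le (hZ.comp measurable_snd) hY (fun p => hZD p.2) (fun p => hYC p.1 p.2)
  simp_rw [← intervalIntegral.integral_const_mul]
  exact (intervalIntegral_integral_swap hint).symm

theorem integral_mul_self_intervalIntegral (hY : Measurable (Function.uncurry Y)) {C : ℝ}
    (hYC : ∀ s ω, |Y s ω| ≤ C) (a b : ℝ) :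
    ∫ ω, (∫ s in a..b, Y s ω) * (∫ s in a..b, Y s ω) ∂P
      = ∫ s in a..b, ∫ u in a..b, ∫ ω, Y s ω * Y u ω ∂P := by
  have hYs (s : ℝ) : Measurable (Y s) := hY.comp measurable_prodMk_left
  simp_rw [integral_mul_intervalIntegral (measurable_intervalIntegral_of_uncurry hY a b)
    (fun ω => abs_intervalIntegral_le_of_abs_le (hYC · ω) a b) hY hYC]
  congr 1 with s
  simp_rw [mul_comm _ (Y s _), integral_mul_intervalIntegral (hYs s) (hYC s) hY hYC]

end BoundedProcess

section Calculus

variable {ψ ψ' ψ'' : ℝ → ℝ}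

theorem intervalIntegral_comp_abs_sub (hψ : ∀ r, HasDerivAt ψ (ψ' r) r) (hψ' : Continuous ψ')
    {s t : ℝ} (hs : 0 ≤ s) (hst : s ≤ t) :
    ∫ u in (0 : ℝ)..t, ψ' |u - s| = ψ s + ψ (t - s) - 2 * ψ 0 := by
  have hint (a b : ℝ) : IntervalIntegrable (fun u => ψ' |u - s|) volume a b :=
    (hψ'.comp (continuous_id.sub continuous_const).abs).intervalIntegrable a b
  have hftc (x : ℝ) : ∫ u in (0 : ℝ)..x, ψ' u = ψ x - ψ 0 :=
    intervalIntegral.integral_eq_sub_of_hasDerivAt (fun r _ => hψ r) (hψ'.intervalIntegrable _ _)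
  have hleft : ∫ u in (0 : ℝ)..s, ψ' |u - s| = ψ s - ψ 0 := by
    rw [intervalIntegral.integral_congr (g := fun u => ψ' (s - u)) fun u hu => by
      rw [Set.uIcc_of_le hs] at hu
      simp only [abs_sub_comm u s, abs_of_nonneg (sub_nonneg.2 hu.2)]]
    simp [hftc]
  have hright : ∫ u in s..t, ψ' |u - s| = ψ (t - s) - ψ 0 := by
    rw [intervalIntegral.integral_congr (g := fun u => ψ' (u - s)) fun u hu => by
      rw [Set.uIcc_of_le hst] at hu
      simp only [abs_of_nonneg (sub_nonneg.2 hu.1)]]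
    simp [hftc]
  rw [← intervalIntegral.integral_add_adjacent_intervals (hint 0 s) (hint s t), hleft, hright]
  ring

theorem intervalIntegral_intervalIntegral_comp_abs_sub (hψ : ∀ r, HasDerivAt ψ (ψ' r) r)
    (hψ' : ∀ r, HasDerivAt ψ' (ψ'' r) r) (hψ'' : Continuous ψ'') {t : ℝ} (ht : 0 ≤ t) :
    ∫ s in (0 : ℝ)..t, ∫ u in (0 : ℝ)..t, ψ'' |u - s| = 2 * (ψ t - ψ 0 - t * ψ' 0) := by
  have hψ'c : Continuous ψ' := continuous_iff_continuousAt.2 fun r => (hψ' r).continuousAt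
  have hftc : ∫ u in (0 : ℝ)..t, ψ' u = ψ t - ψ 0 :=
    intervalIntegral.integral_eq_sub_of_hasDerivAt (fun r _ => hψ r) (hψ'c.intervalIntegrable _ _)
  have hrefl : ∫ s in (0 : ℝ)..t, ψ' (t - s) = ψ t - ψ 0 := by simp [hftc]
  rw [intervalIntegral.integral_congr (g := fun s => ψ' s + ψ' (t - s) - 2 * ψ' 0)
    fun s hs => by
    rw [Set.uIcc_of_le ht] at hs
    exact intervalIntegral_comp_abs_sub hψ' hψ'' hs.1 hs.2]
  rw [intervalIntegral.integral_sub, intervalIntegral.integral_add, hftc, hrefl,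
    intervalIntegral.integral_const]
  · simp only [sub_zero, smul_eq_mul]; ring
  all_goals exact Continuous.intervalIntegrable (by fun_prop) _ _

end Calculus

section StationaryCovariance

variable {Ω E : Type*} [MeasurableSpace Ω] [MeasurableSpace E] {P : Measure Ω}
  [IsFiniteMeasure P] {X : ℝ → Ω → E} {f g : E → ℝ} {ψ ψ' ψ'' : ℝ → ℝ}

theorem integral_sq_of_stationary_covariance
    (hX : Measurable (fun p : ℝ × Ω => X p.1 p.2)) (hf : Measurable f) (hg : Measurable g)
    {Cf Cg : ℝ} (hfC : ∀ x, |f x| ≤ Cf) (hgC : ∀ x, |g x| ≤ Cg)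
    (hψ : ∀ r, HasDerivAt ψ (ψ' r) r) (hψ' : ∀ r, HasDerivAt ψ' (ψ'' r) r)
    (hψ'' : Continuous ψ'')
    (hff : ∀ s t, 0 ≤ s → 0 ≤ t → ∫ ω, f (X s ω) * f (X t ω) ∂P = ψ |t - s|)
    (hfg : ∀ s t, 0 ≤ s → 0 ≤ t → ∫ ω, f (X s ω) * g (X t ω) ∂P = -ψ' |t - s|)
    (hgg : ∀ s t, 0 ≤ s → 0 ≤ t → ∫ ω, g (X s ω) * g (X t ω) ∂P = ψ'' |t - s|)
    {t : ℝ} (ht : 0 ≤ t) :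
    ∫ ω, (f (X t ω) - f (X 0 ω) + ∫ s in (0 : ℝ)..t, g (X s ω)) ^ 2 ∂P = -2 * t * ψ' 0 := by
  have hfX (s : ℝ) : Measurable fun ω => f (X s ω) := hf.comp (hX.comp measurable_prodMk_left)
  have hgX : Measurable (Function.uncurry fun s ω => g (X s ω)) := hg.comp hX
  have hgXC (s : ℝ) (ω : Ω) : |g (X s ω)| ≤ Cg := hgC _
  have hψ'c : Continuous ψ' := continuous_iff_continuousAt.2 fun r => (hψ' r).continuousAt
  have hnonneg {s : ℝ} (hs : s ∈ Set.uIcc 0 t) : 0 ≤ s := by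
    rw [Set.uIcc_of_le ht] at hs
    exact hs.1
  have hcross {r : ℝ} (hr : 0 ≤ r) (hrt : r ≤ t) :
      ∫ ω, f (X r ω) * (∫ s in (0 : ℝ)..t, g (X s ω)) ∂P = 2 * ψ 0 - ψ r - ψ (t - r) := by
    rw [integral_mul_intervalIntegral (hfX r) (fun ω => hfC _) hgX hgXC,
      intervalIntegral.integral_congr fun s hs => hfg r s hr (hnonneg hs),
      intervalIntegral.integral_neg, intervalIntegral_comp_abs_sub hψ hψ'c hr hrt]
    ring
  have hdiag : ∫ ω, (∫ s in (0 : ℝ)..t, g (X s ω)) * (∫ s in (0 : ℝ)..t, g (X s ω)) ∂P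
      = 2 * (ψ t - ψ 0 - t * ψ' 0) := by
    rw [integral_mul_self_intervalIntegral hgX hgXC,
      intervalIntegral.integral_congr fun s hs => intervalIntegral.integral_congr fun u hu =>
        hgg s u (hnonneg hs) (hnonneg hu),
      intervalIntegral_intervalIntegral_comp_abs_sub hψ hψ' hψ'' ht]
  rw [integral_sub_add_sq (hfX t) (hfX 0)
      (measurable_intervalIntegral_of_uncurry hgX 0 t) (fun ω => hfC _) (fun ω => hfC _)
      (fun ω => abs_intervalIntegral_le_of_abs_le (hgXC · ω) 0 t),
    hff t t ht ht, hff 0 0 le_rfl le_rfl, hff t 0 ht le_rfl, hcross ht le_rfl,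
    hcross le_rfl ht, hdiag]
  simp only [sub_self, abs_zero, zero_sub, abs_neg, abs_of_nonneg ht, sub_zero]
  ring

end StationaryCovariance

section Semigroup

variable {H : Type*} [NormedAddCommGroup H] [InnerProductSpace ℝ H]

theorem inner_map_exp_smul {L : H →L[ℝ] H} (hL : (L : H →ₗ[ℝ] H).IsSymmetric)
    (v w : H) (r : ℝ) :
    ⟪L v, NormedSpace.exp (r • L) w⟫ = ⟪v, NormedSpace.exp (r • L) (L w)⟫ := by
  rw [hL.apply_clm]
  exact congrArg _ (DFunLike.congr_fun ((Commute.refl L).smul_right r).exp_right w)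

variable [CompleteSpace H] (L : H →L[ℝ] H)

theorem hasDerivAt_exp_neg_smul_apply (w : H) (r : ℝ) :
    HasDerivAt (fun r : ℝ => NormedSpace.exp ((-r) • L) w)
      (-NormedSpace.exp ((-r) • L) (L w)) r := by
  simpa using ((hasDerivAt_exp_smul_const (𝕂 := ℝ) L (-r)).scomp r (hasDerivAt_neg r)).clm_apply
    (hasDerivAt_const r w)

theorem hasDerivAt_inner_exp_neg_smul (v w : H) (r : ℝ) :
    HasDerivAt (fun r : ℝ => ⟪v, NormedSpace.exp ((-r) • L) w⟫)
      (-⟪v, NormedSpace.exp ((-r) • L) (L w)⟫) r := by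
  simpa using (hasDerivAt_const r v).inner ℝ (hasDerivAt_exp_neg_smul_apply L w r)

end Semigroup

theorem variance_limit_of_martingale_general
    {E : Type*} [MeasurableSpace E] {μ : Measure E}
    {Ω : Type*} [MeasurableSpace Ω] {P : Measure Ω} [IsProbabilityMeasure P]
    (L : Lp ℝ 2 μ →L[ℝ] Lp ℝ 2 μ)
    (hL_sym : ∀ u v : Lp ℝ 2 μ, ⟪L u, v⟫ = ⟪u, L v⟫)
    (X : ℝ → Ω → E)
    (hX_jointly_meas : Measurable (fun p : ℝ × Ω => X p.1 p.2))
    (hcov : ∀ (h k : E → ℝ), Measurable h → Measurable k →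
      (∃ C, ∀ x, |h x| ≤ C) → (∃ C, ∀ x, |k x| ≤ C) →
      ∀ (hh2 : MemLp h 2 μ) (hk2 : MemLp k 2 μ) (s t : ℝ), 0 ≤ s → 0 ≤ t →
      ∫ ω, h (X s ω) * k (X t ω) ∂P
        = ⟪hh2.toLp h, NormedSpace.exp ((-|t - s|) • L) (hk2.toLp k)⟫)
    (f g : E → ℝ) (hf_meas : Measurable f) (hg_meas : Measurable g)
    (hf_bdd : ∃ C, ∀ x, |f x| ≤ C) (hg_bdd : ∃ C, ∀ x, |g x| ≤ C)
    (hf2 : MemLp f 2 μ) (hg2 : MemLp g 2 μ)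
    (hg_repr : hg2.toLp g = L (hf2.toLp f))
    (M : ℝ → Ω → ℝ)
    (hM : ∀ t ω, M t ω = f (X t ω) - f (X 0 ω) + ∫ s in (0:ℝ)..t, g (X s ω)) :
    Tendsto (fun t : ℝ => (1 / t) * ∫ ω, (M t ω) ^ 2 ∂P) atTop
      (nhds (2 * ⟪hf2.toLp f, L (hf2.toLp f)⟫)) := by
  set F := hf2.toLp f
  obtain ⟨Cf, hfC⟩ := hf_bdd
  obtain ⟨Cg, hgC⟩ := hg_bdd
  have hψ'' : Continuous fun r : ℝ => ⟪F, NormedSpace.exp ((-r) • L) (L (L F))⟫ :=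
    continuous_iff_continuousAt.2 fun r => (hasDerivAt_inner_exp_neg_smul L F _ r).continuousAt
  have hsq (t : ℝ) (ht : 0 ≤ t) : ∫ ω, M t ω ^ 2 ∂P = 2 * t * ⟪F, L F⟫ := by
    simp_rw [hM]
    rw [integral_sq_of_stationary_covariance hX_jointly_meas hf_meas hg_meas hfC hgC
      (hasDerivAt_inner_exp_neg_smul L F F)
      (fun r => (hasDerivAt_inner_exp_neg_smul L F (L F) r).fun_neg.congr_deriv (neg_neg _))
      hψ''
      (fun s t hs ht => hcov f f hf_meas hf_meas ⟨Cf, hfC⟩ ⟨Cf, hfC⟩ hf2 hf2 s t hs ht)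
      (fun s t hs ht => by
        rw [hcov f g hf_meas hg_meas ⟨Cf, hfC⟩ ⟨Cg, hgC⟩ hf2 hg2 s t hs ht, hg_repr, neg_neg])
      (fun s t hs ht => by
        rw [hcov g g hg_meas hg_meas ⟨Cg, hgC⟩ ⟨Cg, hgC⟩ hg2 hg2 s t hs ht, hg_repr,
          inner_map_exp_smul hL_sym])
      ht]
    simp
  refine tendsto_const_nhds.congr' ?_
  filter_upwards [eventually_gt_atTop 0] with t ht
  rw [hsq t ht.le]
  field_simp

/-- For a reversible stationary Markov process with symmetric Markov semigroup `exp(-tL)`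
(encoded by the two-time covariance formula), the martingale
`M_t = f(X_t) - f(X_0) + ∫₀ᵗ (Lf)(X_s) ds` satisfies
`lim_{t → ∞} (1/t) E[M_t²] = 2 ⟨f, L f⟩`. -/
theorem variance_limit_of_martingale
    {E : Type*} [MeasurableSpace E] {μ : Measure E} [IsProbabilityMeasure μ]
    {Ω : Type*} [MeasurableSpace Ω] {P : Measure Ω} [IsProbabilityMeasure P]
    (L : Lp ℝ 2 μ →L[ℝ] Lp ℝ 2 μ)
    (hL_sym : ∀ u v : Lp ℝ 2 μ, ⟪L u, v⟫ = ⟪u, L v⟫)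
    (hL_pos : ∀ u : Lp ℝ 2 μ, 0 ≤ ⟪u, L u⟫)
    (X : ℝ → Ω → E)
    (hX_jointly_meas : Measurable (fun p : ℝ × Ω => X p.1 p.2))
    (hcov : ∀ (h k : E → ℝ), Measurable h → Measurable k →
      (∃ C, ∀ x, |h x| ≤ C) → (∃ C, ∀ x, |k x| ≤ C) →
      ∀ (hh2 : MemLp h 2 μ) (hk2 : MemLp k 2 μ) (s t : ℝ), 0 ≤ s → 0 ≤ t →
      ∫ ω, h (X s ω) * k (X t ω) ∂P
        = ⟪hh2.toLp h, NormedSpace.exp ((-|t - s|) • L) (hk2.toLp k)⟫)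
    (f g : E → ℝ) (hf_meas : Measurable f) (hg_meas : Measurable g)
    (hf_bdd : ∃ C, ∀ x, |f x| ≤ C) (hg_bdd : ∃ C, ∀ x, |g x| ≤ C)
    (hf2 : MemLp f 2 μ) (hg2 : MemLp g 2 μ)
    (hg_repr : hg2.toLp g = L (hf2.toLp f))
    (M : ℝ → Ω → ℝ)
    (hM : ∀ t ω, M t ω = f (X t ω) - f (X 0 ω) + ∫ s in (0:ℝ)..t, g (X s ω)) :
    Tendsto (fun t : ℝ => (1 / t) * ∫ ω, (M t ω) ^ 2 ∂P) atTop
      (nhds (2 * ⟪hf2.toLp f, L (hf2.toLp f)⟫)) :=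
  variance_limit_of_martingale_general L hL_sym X hX_jointly_meas hcov f g hf_meas hg_meas hf_bdd
    hg_bdd hf2 hg2 hg_repr M hM
end

section
/- Let H be a real Hilbert space and L : H → H a bounded self-adjoint positive operator. Then for every f ∈ H, lim_{t→∞} (1/t) ∫₀ᵗ ∫₀ᵗ ⟨exp(−|s−r| L)(L f), L f⟩ dr ds = 2 ⟨f, L f⟩. -/
/-!
Put `φ u = ⟪e^{-uL} f, L f⟫` and `F u = ⟪e^{-uL} f, f⟫`. Then `φ' u = -⟪e^{-uL} L f, L f⟫` and
`F' = -φ`, so splitting the inner integral at `r = s` gives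
`∫₀ᵗ∫₀ᵗ ⟪e^{-|s-r|L} L f, L f⟫ dr ds = 2 t φ 0 - 2 (F 0 - F t)`.
Writing `e^{-uL}` as the square of the self-adjoint operator `e^{-uL/2}` shows that `e^{-uL}` and
`L e^{-uL}` are positive, hence `φ, F ≥ 0` and `0 ≤ F 0 - F t ≤ F 0`: the correction term stays
bounded and vanishes after division by `t`.
-/

open Filter Topology intervalIntegral Set
open scoped RealInnerProductSpace

section DoubleIntegral

variable {g φ : ℝ → ℝ}

theorem integral_comp_abs_of_hasDerivAt_neg (hg : Continuous g)
    (hφ : ∀ u, HasDerivAt φ (-g u) u) {a : ℝ} (ha : 0 ≤ a) :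
    ∫ x in (0:ℝ)..a, g |x| = φ 0 - φ a := by
  rw [integral_congr (g := g) fun x hx => by
    rw [uIcc_of_le ha] at hx
    simp only [abs_of_nonneg hx.1]]
  rw [integral_eq_sub_of_hasDerivAt (f := -φ) (fun x _ => by simpa using (hφ x).neg)
    (hg.intervalIntegrable _ _), Pi.neg_apply, Pi.neg_apply]
  ring

theorem integral_comp_abs_sub_of_hasDerivAt_neg (hg : Continuous g)
    (hφ : ∀ u, HasDerivAt φ (-g u) u) {s t : ℝ} (hs : 0 ≤ s) (hst : s ≤ t) :
    ∫ r in (0:ℝ)..t, g |s - r| = 2 * φ 0 - φ s - φ (t - s) := by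
  have hcont : Continuous fun x => g |x| := hg.comp continuous_abs
  have hleft : ∫ x in (s - t)..0, g |x| = φ 0 - φ (t - s) := by
    rw [← integral_comp_abs_of_hasDerivAt_neg hg hφ (sub_nonneg.2 hst)]
    simpa using (integral_comp_neg (a := 0) (b := t - s) fun x => g |x|).symm
  rw [integral_comp_sub_left (fun x => g |x|), sub_zero,
    ← integral_add_adjacent_intervals (hcont.intervalIntegrable _ 0) (hcont.intervalIntegrable 0 _),
    hleft, integral_comp_abs_of_hasDerivAt_neg hg hφ hs]
  ring

theorem integral_integral_comp_abs_sub_of_hasDerivAt_neg (hg : Continuous g)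
    (hφ : ∀ u, HasDerivAt φ (-g u) u) {t : ℝ} (ht : 0 ≤ t) :
    ∫ s in (0:ℝ)..t, ∫ r in (0:ℝ)..t, g |s - r| = 2 * t * φ 0 - 2 * ∫ u in (0:ℝ)..t, φ u := by
  have hφc : Continuous φ := continuous_iff_continuousAt.2 fun u => (hφ u).continuousAt
  have hφi : IntervalIntegrable φ MeasureTheory.volume 0 t := hφc.intervalIntegrable _ _
  have hφi' : IntervalIntegrable (fun s => φ (t - s)) MeasureTheory.volume 0 t :=
    (hφc.comp (continuous_sub_left t)).intervalIntegrable _ _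
  calc ∫ s in (0:ℝ)..t, ∫ r in (0:ℝ)..t, g |s - r|
      = ∫ s in (0:ℝ)..t, (2 * φ 0 - φ s - φ (t - s)) := integral_congr fun s hs => by
        rw [uIcc_of_le ht] at hs
        exact integral_comp_abs_sub_of_hasDerivAt_neg hg hφ hs.1 hs.2
    _ = t * (2 * φ 0) - (∫ u in (0:ℝ)..t, φ u) - ∫ s in (0:ℝ)..t, φ (t - s) := by
        rw [integral_sub (intervalIntegrable_const.sub hφi) hφi',
          integral_sub intervalIntegrable_const hφi, integral_const, smul_eq_mul, sub_zero]
    _ = 2 * t * φ 0 - 2 * ∫ u in (0:ℝ)..t, φ u := by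
        rw [integral_comp_sub_left, sub_self, sub_zero]
        ring

theorem tendsto_integral_integral_comp_abs_sub_div (hg : Continuous g)
    (hφ : ∀ u, HasDerivAt φ (-g u) u)
    (hbdd : IsBoundedUnder (· ≤ ·) atTop fun t => |∫ u in (0:ℝ)..t, φ u|) :
    Tendsto (fun t => (1 / t) * ∫ s in (0:ℝ)..t, ∫ r in (0:ℝ)..t, g |s - r|) atTop
      (𝓝 (2 * φ 0)) := by
  have hmean : Tendsto (fun t => t⁻¹ * ∫ u in (0:ℝ)..t, φ u) atTop (𝓝 0) :=
    tendsto_inv_atTop_zero.zero_mul_isBoundedUnder_le (by simpa [Function.comp_def] using hbdd)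
  have hlim := (hmean.const_mul 2).const_sub (2 * φ 0)
  rw [mul_zero, sub_zero] at hlim
  refine hlim.congr' ?_
  filter_upwards [eventually_gt_atTop 0] with t ht
  rw [integral_integral_comp_abs_sub_of_hasDerivAt_neg hg hφ ht.le]
  field_simp

theorem isBoundedUnder_abs_integral_of_hasDerivAt_neg {F : ℝ → ℝ}
    (hF : ∀ u, HasDerivAt F (-φ u) u) (hφ : Continuous φ) (hφ₀ : ∀ u, 0 ≤ φ u)
    (hF₀ : ∀ u, 0 ≤ F u) :
    IsBoundedUnder (· ≤ ·) atTop fun t => |∫ u in (0:ℝ)..t, φ u| := by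
  refine isBoundedUnder_of_eventually_le (a := F 0) ?_
  filter_upwards [eventually_ge_atTop 0] with t ht
  have hFTC : ∫ u in (0:ℝ)..t, φ u = F 0 - F t := by
    rw [integral_eq_sub_of_hasDerivAt (f := -F) (fun u _ => by simpa using (hF u).neg)
      (hφ.intervalIntegrable _ _), Pi.neg_apply, Pi.neg_apply]
    ring
  rw [abs_of_nonneg (integral_nonneg ht fun u _ => hφ₀ u), hFTC]
  linarith [hF₀ t]

end DoubleIntegral

open NormedSpace ContinuousLinearMap

section ExpSmul

variable {H : Type*} [NormedAddCommGroup H] [InnerProductSpace ℝ H]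

theorem exp_smul_apply_comm (L : H →L[ℝ] H) (u : ℝ) (x : H) :
    exp (u • L) (L x) = L (exp (u • L) x) :=
  congrArg (· x) ((Commute.refl L).smul_right u).exp_right.eq.symm

variable [CompleteSpace H] {L : H →L[ℝ] H}

theorem ContinuousLinearMap.IsPositive.mul_exp_smul {T : H →L[ℝ] H} (hT : T.IsPositive)
    (hTL : Commute T L) (hL : IsSelfAdjoint L) (u : ℝ) : (T * exp (u • L)).IsPositive := by
  -- `exp_add_of_commute` is stated for `ℚ`-algebras.
  let _ := NormedAlgebra.restrictScalars ℚ ℝ (H →L[ℝ] H)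
  set S := exp ((u / 2) • L)
  have hS : IsSelfAdjoint S := (IsSelfAdjoint.smul (star_trivial (u / 2)) hL).exp
  have hSq : exp (u • L) = S * S := by
    rw [← exp_add_of_commute (Commute.refl _), ← add_smul, add_halves]
  have hTS : Commute T S := (hTL.smul_right (u / 2)).exp_right
  have := hT.conj_adjoint S
  rwa [hS.adjoint_eq, ← mul_def, ← mul_def, ← mul_assoc, ← hTS.eq, mul_assoc, ← hSq] at this

theorem hasDerivAt_inner_exp_neg_smul_apply (L : H →L[ℝ] H) (x y : H) (u : ℝ) :
    HasDerivAt (fun u : ℝ => ⟪exp ((-u) • L) x, y⟫) (-⟪exp ((-u) • L) (L x), y⟫) u := by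
  have hexp := ((hasDerivAt_exp_smul_const L (-u)).scomp u (hasDerivAt_neg u)).clm_apply
    (hasDerivAt_const u x)
  simpa [inner_neg_left] using hexp.inner ℝ (hasDerivAt_const u y)

end ExpSmul

/-- Deterministic semigroup computation: for a bounded self-adjoint positive operator `L`
on a real Hilbert space, `lim_{t→∞} (1/t) ∫₀ᵗ∫₀ᵗ ⟨exp(-|s-r|L)(Lf), Lf⟩ dr ds = 2⟨f, Lf⟩`. -/
theorem semigroup_double_integral_limit
    {H : Type*} [NormedAddCommGroup H] [InnerProductSpace ℝ H] [CompleteSpace H]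
    (L : H →L[ℝ] H)
    (hL_sym : ∀ u v : H, ⟪L u, v⟫ = ⟪u, L v⟫)
    (hL_pos : ∀ u : H, 0 ≤ ⟪u, L u⟫)
    (f : H) :
    Tendsto (fun t : ℝ => (1 / t) * ∫ s in (0:ℝ)..t, ∫ r in (0:ℝ)..t,
        ⟪NormedSpace.exp ((-|s - r|) • L) (L f), L f⟫) atTop
      (nhds (2 * ⟪f, L f⟫)) := by
  have hL : L.IsPositive :=
    L.isPositive_iff.2 ⟨hL_sym, fun u => real_inner_comm (L u) u ▸ hL_pos u⟩
  have hφ := hasDerivAt_inner_exp_neg_smul_apply L f (L f)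
  have hF (u : ℝ) :
      HasDerivAt (fun u : ℝ => ⟪exp ((-u) • L) f, f⟫) (-⟪exp ((-u) • L) f, L f⟫) u := by
    rw [← hL_sym, ← exp_smul_apply_comm]
    exact hasDerivAt_inner_exp_neg_smul_apply L f f u
  have hφ₀ (u : ℝ) : 0 ≤ ⟪exp ((-u) • L) f, L f⟫ := by
    rw [← hL_sym]
    exact (hL.mul_exp_smul (Commute.refl L) hL.isSelfAdjoint (-u)).inner_nonneg_left f
  have hF₀ (u : ℝ) : 0 ≤ ⟪exp ((-u) • L) f, f⟫ := by
    simpa using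
      (isPositive_one.mul_exp_smul (Commute.one_left L) hL.isSelfAdjoint (-u)).inner_nonneg_left f
  have hg : Differentiable ℝ fun u : ℝ => ⟪exp ((-u) • L) (L f), L f⟫ := fun u =>
    (hasDerivAt_inner_exp_neg_smul_apply L (L f) (L f) u).differentiableAt
  have hlim := tendsto_integral_integral_comp_abs_sub_div hg.continuous hφ
    (isBoundedUnder_abs_integral_of_hasDerivAt_neg hF
      (Differentiable.continuous fun u => (hφ u).differentiableAt) hφ₀ hF₀)
  simpa using hlim
end

section
/- Let H be a real Hilbert space, L : H → H a bounded self-adjoint operator, g ∈ H and t ≥ 0. Then ∫₀ᵗ ∫₀ᵗ ⟨exp(−|s−r| L) g, g⟩ dr ds = 4 ∫₀^{t/2} (t − 2s) ‖exp(−s L) g‖² ds. -/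
/-!
Writing `f u = ⟪exp(-uL) g, g⟫`, the double integral of `f |s - r|` over the square `[0, t]²`
equals `2 ∫₀ᵗ (t - u) f u du`: for fixed `s` the inner integral is `F s + F (t - s)` with `F` the
primitive of `f`, and `∫₀ᵗ F = ∫₀ᵗ (t - u) f u du` by parts. Self-adjointness and the semigroup
law give `f (2s) = ‖exp(-sL) g‖²`, and the substitution `u = 2s` finishes the proof.
-/

open scoped RealInnerProductSpace
open intervalIntegral NormedSpace Set

theorem integral_comp_abs_sub_eq_add {f : ℝ → ℝ} (hf : Continuous f) {s t : ℝ}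
    (hs : s ∈ Icc 0 t) :
    ∫ r in (0 : ℝ)..t, f |s - r| = (∫ u in (0 : ℝ)..s, f u) + ∫ u in (0 : ℝ)..(t - s), f u := by
  have hint : ∀ a b : ℝ, IntervalIntegrable (fun r => f |s - r|) MeasureTheory.volume a b :=
    fun a b => (hf.comp (continuous_const.sub continuous_id).abs).intervalIntegrable a b
  have h_left : ∫ r in (0 : ℝ)..s, f |s - r| = ∫ u in (0 : ℝ)..s, f u := by
    rw [integral_congr (g := fun r => f (s - r)) fun r hr => by
        rw [uIcc_of_le hs.1] at hr
        simp only [abs_of_nonneg (sub_nonneg.mpr hr.2)],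
      integral_comp_sub_left, sub_self, sub_zero]
  have h_right : ∫ r in s..t, f |s - r| = ∫ u in (0 : ℝ)..(t - s), f u := by
    rw [integral_congr (g := fun r => f (r - s)) fun r hr => by
        rw [uIcc_of_le hs.2] at hr
        simp only [abs_sub_comm s r, abs_of_nonneg (sub_nonneg.mpr hr.1)],
      integral_comp_sub_right, sub_self]
  rw [← integral_add_adjacent_intervals (hint 0 s) (hint s t), h_left, h_right]

/-- Cauchy's formula for repeated integration, in the case of two integrations. -/
theorem integral_integral_eq_integral_sub_mul {f : ℝ → ℝ} (hf : Continuous f) (t : ℝ) :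
    ∫ s in (0 : ℝ)..t, ∫ u in (0 : ℝ)..s, f u = ∫ u in (0 : ℝ)..t, (t - u) * f u := by
  have h_parts := integral_mul_deriv_eq_deriv_mul (a := 0) (b := t)
    (u := fun s => t - s) (u' := fun _ => -1) (v := fun s => ∫ u in (0 : ℝ)..s, f u) (v' := f)
    (fun s _ => (hasDerivAt_id s).const_sub t)
    (fun s _ => integral_hasDerivAt_right (hf.intervalIntegrable 0 s)
      (hf.stronglyMeasurableAtFilter _ _) hf.continuousAt)
    (continuous_const.intervalIntegrable _ _) (hf.intervalIntegrable _ _)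
  simp [h_parts, integral_neg]

theorem integral_integral_comp_abs_sub {f : ℝ → ℝ} (hf : Continuous f) {t : ℝ} (ht : 0 ≤ t) :
    ∫ s in (0 : ℝ)..t, ∫ r in (0 : ℝ)..t, f |s - r| = 2 * ∫ u in (0 : ℝ)..t, (t - u) * f u := by
  have hF : Continuous fun s => ∫ u in (0 : ℝ)..s, f u :=
    continuous_primitive (fun a b => hf.intervalIntegrable a b) 0
  have h_inner : ∀ s ∈ uIcc 0 t, ∫ r in (0 : ℝ)..t, f |s - r|
      = (∫ u in (0 : ℝ)..s, f u) + ∫ u in (0 : ℝ)..(t - s), f u := fun s hs =>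
    integral_comp_abs_sub_eq_add hf (uIcc_of_le ht ▸ hs)
  have h_reflect : ∫ s in (0 : ℝ)..t, ∫ u in (0 : ℝ)..(t - s), f u
      = ∫ s in (0 : ℝ)..t, ∫ u in (0 : ℝ)..s, f u := by
    rw [integral_comp_sub_left (fun s => ∫ u in (0 : ℝ)..s, f u), sub_self, sub_zero]
  have hF_reflect : Continuous fun s => ∫ u in (0 : ℝ)..(t - s), f u :=
    hF.comp (continuous_const.sub continuous_id)
  rw [integral_congr h_inner, integral_add (hF.intervalIntegrable _ _)
    (hF_reflect.intervalIntegrable _ _), h_reflect,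
    integral_integral_eq_integral_sub_mul hf]
  ring

theorem IsSelfAdjoint.inner_exp_two_nsmul_apply_self {𝕜 H : Type*} [RCLike 𝕜]
    [NormedAddCommGroup H] [InnerProductSpace 𝕜 H] [CompleteSpace H] {A : H →L[𝕜] H}
    (hA : IsSelfAdjoint A) (g : H) :
    inner 𝕜 (NormedSpace.exp (2 • A) g) g = (‖NormedSpace.exp A g‖ ^ 2 : 𝕜) := by
  let +nondep : NormedAlgebra ℚ (H →L[𝕜] H) := .restrictScalars ℚ 𝕜 _
  have h_symm := ContinuousLinearMap.isSelfAdjoint_iff_isSymmetric.mp hA.exp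
  rw [exp_nsmul, pow_two]
  exact (h_symm _ _).trans (inner_self_eq_norm_sq_to_K _)

/-- For a bounded self-adjoint operator `L` on a real Hilbert space and `g ∈ H`, `t ≥ 0`:
`∫₀ᵗ∫₀ᵗ ⟨exp(-|s-r|L) g, g⟩ dr ds = 4 ∫₀^{t/2} (t - 2s) ‖exp(-sL) g‖² ds`. -/
theorem double_integral_semigroup_identity
    {H : Type*} [NormedAddCommGroup H] [InnerProductSpace ℝ H] [CompleteSpace H]
    (L : H →L[ℝ] H)
    (hL_sym : ∀ u v : H, ⟪L u, v⟫ = ⟪u, L v⟫)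
    (g : H) (t : ℝ) (ht : 0 ≤ t) :
    ∫ s in (0:ℝ)..t, ∫ r in (0:ℝ)..t, ⟪NormedSpace.exp ((-|s - r|) • L) g, g⟫
      = 4 * ∫ s in (0:ℝ)..(t / 2), (t - 2 * s) * ‖NormedSpace.exp ((-s) • L) g‖ ^ 2 := by
  let +nondep : NormedAlgebra ℚ (H →L[ℝ] H) := .restrictScalars ℚ ℝ _
  set f : ℝ → ℝ := fun u => ⟪exp ((-u) • L) g, g⟫
  have hf : Continuous f := by fun_prop
  have hL : IsSelfAdjoint L := ContinuousLinearMap.isSelfAdjoint_iff_isSymmetric.mpr hL_sym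
  have hf_two_mul (s : ℝ) : f (2 * s) = ‖exp ((-s) • L) g‖ ^ 2 := by
    have h_smul : (-(2 * s)) • L = 2 • ((-s) • L) := by
      rw [two_nsmul, ← add_smul]; ring_nf
    simp only [f, h_smul]
    exact IsSelfAdjoint.inner_exp_two_nsmul_apply_self ((IsSelfAdjoint.all (-s)).smul hL) g
  calc ∫ s in (0:ℝ)..t, ∫ r in (0:ℝ)..t, f |s - r|
      = 2 * ∫ u in (0 : ℝ)..t, (t - u) * f u := integral_integral_comp_abs_sub hf ht
    _ = 4 * ∫ s in (0 : ℝ)..(t / 2), (t - 2 * s) * f (2 * s) := by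
      rw [integral_comp_mul_left (fun u => (t - u) * f u) two_ne_zero, mul_zero,
        mul_div_cancel₀ t two_ne_zero, smul_eq_mul]
      ring
    _ = _ := by simp only [hf_two_mul]
end

section
/- Let H be a real Hilbert space, L : H → H a bounded self-adjoint operator, g ∈ H and t ≥ 0. Then 2t ∫₀^{t/4} ‖exp(−s L) g‖² ds ≤ ∫₀ᵗ ∫₀ᵗ ⟨exp(−|s−r| L) g, g⟩ dr ds ≤ 4t ∫₀^{t/2} ‖exp(−s L) g‖² ds. -/
/-!
For self-adjoint `L` the correlation is a square,
`⟪exp (-a • L) g, g⟫ = ‖exp (-(a / 2) • L) g‖ ^ 2`, so it has the form `φ |s - r|` with `φ ≥ 0`.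
Splitting the inner integral at `r = s` turns it into `F s + F (t - s)` with `F x = ∫₀ˣ φ`
nondecreasing, and for `s ∈ [0, t]` this lies between `F (t / 2)` (the larger of `s`, `t - s` is
at least `t / 2`) and `2 F t`. Integrating in `s` and substituting `u = 2 v` in `F` gives the
constants.
-/

open scoped RealInnerProductSpace
open Set intervalIntegral MeasureTheory

section SelfAdjointExp

variable {H : Type*} [NormedAddCommGroup H] [InnerProductSpace ℝ H] [CompleteSpace H]

theorem continuous_exp_smul_apply (L : H →L[ℝ] H) (g : H) :
    Continuous fun s : ℝ => NormedSpace.exp (s • L) g :=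
  (continuous_iff_continuousAt.2 fun s =>
    (hasDerivAt_exp_smul_const (𝕂 := ℝ) L s).continuousAt).clm_apply continuous_const

theorem exp_smul_eq_exp_half_smul_mul_self (L : H →L[ℝ] H) (c : ℝ) :
    NormedSpace.exp (c • L) = NormedSpace.exp ((c / 2) • L) * NormedSpace.exp ((c / 2) • L) := by
  have hball : (c / 2) • L ∈
      Metric.eball (0 : H →L[ℝ] H) (NormedSpace.expSeries ℝ (H →L[ℝ] H)).radius := by
    simp [NormedSpace.expSeries_radius_eq_top]
  rw [← NormedSpace.exp_add_of_commute_of_mem_ball (Commute.refl _) hball hball, ← add_smul,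
    add_halves]

theorem inner_exp_smul_apply_self {L : H →L[ℝ] H} (hL : IsSelfAdjoint L) (c : ℝ) (g : H) :
    ⟪NormedSpace.exp (c • L) g, g⟫ = ‖NormedSpace.exp ((c / 2) • L) g‖ ^ 2 := by
  have hsym : IsSelfAdjoint (NormedSpace.exp ((c / 2) • L)) := ((IsSelfAdjoint.all _).smul hL).exp
  rw [exp_smul_eq_exp_half_smul_mul_self]
  exact (hsym.isSymmetric _ _).trans (real_inner_self_eq_norm_sq _)

end SelfAdjointExp

theorem MonotoneOn.le_add_sub_of_mem_Icc {F : ℝ → ℝ} (hF : MonotoneOn F (Ici 0)) (hF0 : 0 ≤ F 0)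
    {s t : ℝ} (hs : s ∈ Icc 0 t) : F (t / 2) ≤ F s + F (t - s) := by
  obtain ⟨hs0, hst⟩ := hs
  have hts : (0 : ℝ) ≤ t - s := sub_nonneg.2 hst
  have hFs : 0 ≤ F s := hF0.trans (hF self_mem_Ici hs0 hs0)
  have hFts : 0 ≤ F (t - s) := hF0.trans (hF self_mem_Ici hts hts)
  rcases le_total s (t / 2) with h | h
  · linarith [hF (by linarith : (0 : ℝ) ≤ t / 2) hts (by linarith : t / 2 ≤ t - s)]
  · linarith [hF (by linarith : (0 : ℝ) ≤ t / 2) hs0 h]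

theorem MonotoneOn.add_sub_le_of_mem_Icc {F : ℝ → ℝ} (hF : MonotoneOn F (Ici 0))
    {s t : ℝ} (hs : s ∈ Icc 0 t) : F s + F (t - s) ≤ 2 * F t := by
  have h₁ := hF hs.1 (hs.1.trans hs.2) hs.2
  have h₂ := hF (sub_nonneg.2 hs.2 : 0 ≤ t - s) (hs.1.trans hs.2) (by linarith [hs.1])
  linarith

section AbsDifference

variable {φ : ℝ → ℝ}

theorem monotoneOn_primitive_of_nonneg (hφ : ∀ x, IntervalIntegrable φ volume 0 x)
    (hφ0 : ∀ x, 0 ≤ x → 0 ≤ φ x) :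
    MonotoneOn (fun x => ∫ u in (0 : ℝ)..x, φ u) (Ici 0) := fun _ hx _ _ hxy =>
  integral_mono_interval le_rfl hx hxy
    ((ae_restrict_iff' measurableSet_Ioc).2 (.of_forall fun u hu => hφ0 u hu.1.le))
    (hφ _)

theorem integral_comp_abs_sub (hφ : Continuous φ) {s t : ℝ} (hs : s ∈ Icc 0 t) :
    ∫ r in (0 : ℝ)..t, φ |s - r| = (∫ u in (0 : ℝ)..s, φ u) + ∫ u in (0 : ℝ)..(t - s), φ u := by
  have hint : ∀ a b, IntervalIntegrable (fun r => φ |s - r|) volume a b := fun a b =>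
    (hφ.comp (continuous_const.sub continuous_id).abs).intervalIntegrable a b
  have hleft : ∫ r in (0 : ℝ)..s, φ |s - r| = ∫ u in (0 : ℝ)..s, φ u := by
    rw [integral_comp_sub_left (fun u => φ |u|), sub_self, sub_zero]
    refine integral_congr fun u hu => ?_
    rw [uIcc_of_le hs.1] at hu
    simp only [abs_of_nonneg hu.1]
  have hright : ∫ r in s..t, φ |s - r| = ∫ u in (0 : ℝ)..(t - s), φ u := by
    rw [← sub_self s, ← integral_comp_sub_right]
    refine integral_congr fun r hr => ?_
    rw [uIcc_of_le hs.2] at hr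
    simp only [abs_sub_comm s r, abs_of_nonneg (sub_nonneg.2 hr.1)]
  rw [← integral_add_adjacent_intervals (hint 0 s) (hint s t), hleft, hright]

theorem integral_integral_comp_abs_sub_bounds (hφ : Continuous φ) (hφ0 : ∀ x, 0 ≤ x → 0 ≤ φ x)
    {t : ℝ} (ht : 0 ≤ t) :
    t * (∫ u in (0 : ℝ)..(t / 2), φ u) ≤ ∫ s in (0 : ℝ)..t, ∫ r in (0 : ℝ)..t, φ |s - r| ∧
      ∫ s in (0 : ℝ)..t, ∫ r in (0 : ℝ)..t, φ |s - r| ≤ 2 * t * ∫ u in (0 : ℝ)..t, φ u := by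
  set F : ℝ → ℝ := fun x => ∫ u in (0 : ℝ)..x, φ u
  have hF : MonotoneOn F (Ici 0) :=
    monotoneOn_primitive_of_nonneg (fun x => hφ.intervalIntegrable 0 x) hφ0
  have hG : Continuous fun s => F s + F (t - s) := by
    have := continuous_primitive (μ := volume) (fun a b => hφ.intervalIntegrable a b) 0
    exact this.add (this.comp (continuous_const.sub continuous_id))
  have hdouble : ∫ s in (0 : ℝ)..t, ∫ r in (0 : ℝ)..t, φ |s - r| =
      ∫ s in (0 : ℝ)..t, F s + F (t - s) :=
    integral_congr fun s hs => integral_comp_abs_sub hφ (uIcc_of_le ht ▸ hs)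
  rw [hdouble]
  constructor
  · simpa using integral_mono_on (μ := volume) ht intervalIntegrable_const
      (hG.intervalIntegrable 0 t) fun s hs => hF.le_add_sub_of_mem_Icc (by simp [F]) hs
  · have := integral_mono_on (μ := volume) ht (hG.intervalIntegrable 0 t) intervalIntegrable_const
      fun s hs => hF.add_sub_le_of_mem_Icc hs
    simp only [intervalIntegral.integral_const, sub_zero, smul_eq_mul] at this
    linarith

end AbsDifference

/-- Two-sided bounds for the double time integral of the symmetric semigroup correlation:
`2t ∫₀^{t/4} ‖exp(-sL) g‖² ds ≤ ∫₀ᵗ∫₀ᵗ ⟨exp(-|s-r|L) g, g⟩ dr ds ≤ 4t ∫₀^{t/2} ‖exp(-sL) g‖² ds`. -/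
theorem double_integral_semigroup_bounds
    {H : Type*} [NormedAddCommGroup H] [InnerProductSpace ℝ H] [CompleteSpace H]
    (L : H →L[ℝ] H)
    (hL_sym : ∀ u v : H, ⟪L u, v⟫ = ⟪u, L v⟫)
    (g : H) (t : ℝ) (ht : 0 ≤ t) :
    2 * t * (∫ s in (0:ℝ)..(t / 4), ‖NormedSpace.exp ((-s) • L) g‖ ^ 2)
        ≤ ∫ s in (0:ℝ)..t, ∫ r in (0:ℝ)..t, ⟪NormedSpace.exp ((-|s - r|) • L) g, g⟫ ∧
      (∫ s in (0:ℝ)..t, ∫ r in (0:ℝ)..t, ⟪NormedSpace.exp ((-|s - r|) • L) g, g⟫)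
        ≤ 4 * t * ∫ s in (0:ℝ)..(t / 2), ‖NormedSpace.exp ((-s) • L) g‖ ^ 2 := by
  have hL : IsSelfAdjoint L := ContinuousLinearMap.isSelfAdjoint_iff_isSymmetric.2 hL_sym
  set ψ : ℝ → ℝ := fun s => ‖NormedSpace.exp ((-s) • L) g‖ ^ 2
  have hψ : Continuous ψ := ((continuous_exp_smul_apply L g).comp continuous_neg).norm.pow 2
  have hcorr (s r : ℝ) : ⟪NormedSpace.exp ((-|s - r|) • L) g, g⟫ = ψ (|s - r| / 2) := by
    rw [inner_exp_smul_apply_self hL, neg_div]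
  have hscale (a : ℝ) : ∫ u in (0 : ℝ)..a, ψ (u / 2) = 2 * ∫ u in (0 : ℝ)..(a / 2), ψ u := by
    rw [integral_comp_div ψ two_ne_zero, zero_div, smul_eq_mul]
  obtain ⟨hlower, hupper⟩ := integral_integral_comp_abs_sub_bounds (φ := fun x => ψ (x / 2))
    (hψ.comp (continuous_id.div_const 2)) (fun _ _ => sq_nonneg _) ht
  simp only [hcorr]
  rw [hscale, div_div, show (2 : ℝ) * 2 = 4 by norm_num] at hlower
  rw [hscale] at hupper
  constructor <;> linarith
end
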